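/- Let n ≥ 1 be a natural number and let f : Fin n → ℕ satisfy f(i) ≥ 1 for all i; set t = ∑_{i} f(i). For each natural number k with 0 ≤ k ≤ n − 2, define f_k : Fin (n+k+2) → ℕ by f_k(i) = f(i) for the first n indices, f_k(i) = t for the next k+1 indices, and f_k(i) = (k+1)·t for the last index, and let E_k denote the number of subsets S ⊆ Fin (n+k+2) with 2|S| = n + k + 2 that are equal-sum subsets for f_k. Then 2 · #{S ⊆ Fin n : S is an equal-sum subset for f} = E_0 + 2 · ∑_{k=1}^{n−2} E_k. -/

import Mathlib

/-!
Complementation pairs off the equal-size, equal-sum subsets of the augmented multiset `f_k`, so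
`E k` is twice the number of those avoiding the heavy element `(k+1)t`. The total weight of `f_k` is
`(2k+3)t`, so such a subset weighs `(k+1)t + t/2`; since its part inside `f` weighs at most `t`,
it must contain all `k+1` copies of `t` together with an equal-sum subset `A` of `f`, and then
`2|A| + k = n`. Hence `E k = 2 · #{A equal-sum for f : 2|A| + k = n}`. Sorting the equal-sum
subsets of `f` by `n - 2|A|`, with complementation exchanging `2|A| < n` and `2|A| > n` and
`t > 0` excluding `A = ∅`, gives the identity.
-/

open Finset

section Counting

variable {α : Type*} [Fintype α]

lemma card_filter_add_card_filter_and_not (P Q : Finset α → Prop) [DecidablePred P]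
    [DecidablePred Q] :
    #{S | P S ∧ Q S} + #{S | P S ∧ ¬ Q S} = #{S | P S} := by
  rw [← filter_filter, ← filter_filter, card_filter_add_card_filter_not]

lemma card_filter_map_equiv {β : Type*} [Fintype β] (e : α ≃ β) (P : Finset β → Prop)
    [DecidablePred P] : #{S : Finset α | P (S.map e.toEmbedding)} = #{S | P S} :=
  card_equiv e.finsetCongr fun S => by simp [Equiv.finsetCongr_apply]

variable [DecidableEq α]

lemma card_filter_compl (P : Finset α → Prop) [DecidablePred P] :
    #{S | P Sᶜ} = #{S | P S} :=
  card_nbij' compl compl (by simp [Set.MapsTo]) (by simp [Set.MapsTo])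
    (fun S _ => compl_compl S) (fun S _ => compl_compl S)

lemma card_filter_eq_two_mul_card_filter_notMem (P : Finset α → Prop) [DecidablePred P]
    (hP : ∀ S, P Sᶜ ↔ P S) (a : α) : #{S | P S} = 2 * #{S | P S ∧ a ∉ S} := by
  have hmem : #{S | P S ∧ a ∈ S} = #{S | P S ∧ a ∉ S} := by
    rw [← card_filter_compl]
    simp only [hP, mem_compl]
  rw [← card_filter_add_card_filter_and_not P (fun S => a ∈ S), hmem, two_mul]

end Counting

section EqualSum

variable {α : Type*} [Fintype α] [DecidableEq α]

def IsEqualSum (g : α → ℕ) (S : Finset α) : Prop :=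
  ∑ i ∈ S, g i = ∑ i ∈ Sᶜ, g i

instance (g : α → ℕ) : DecidablePred (IsEqualSum g) :=
  fun _ => inferInstanceAs (Decidable (_ = _))

variable {g : α → ℕ} {S : Finset α}

lemma isEqualSum_compl : IsEqualSum g Sᶜ ↔ IsEqualSum g S := by
  rw [IsEqualSum, IsEqualSum, compl_compl, eq_comm]

lemma isEqualSum_iff_two_mul : IsEqualSum g S ↔ 2 * ∑ i ∈ S, g i = ∑ i, g i := by
  rw [IsEqualSum, ← sum_add_sum_compl S g]
  omega

lemma IsEqualSum.nonempty (h : IsEqualSum g S) (hg : 0 < ∑ i, g i) : S.Nonempty := by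
  rw [nonempty_iff_ne_empty]
  rintro rfl
  rw [isEqualSum_iff_two_mul, sum_empty] at h
  omega

lemma isEqualSum_map_equiv {β : Type*} [Fintype β] [DecidableEq β] (e : α ≃ β)
    {g : β → ℕ} :
    IsEqualSum g (S.map e.toEmbedding) ↔ IsEqualSum (g ∘ e) S := by
  rw [isEqualSum_iff_two_mul, isEqualSum_iff_two_mul, sum_map, ← e.sum_comp]
  rfl

lemma card_isEqualSum_two_mul_card_lt (hg : 0 < ∑ i, g i) :
    #{S | IsEqualSum g S ∧ 2 * #S < Fintype.card α} =
      ∑ k ∈ Icc 1 (Fintype.card α - 2),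
        #{S | IsEqualSum g S ∧ 2 * #S + k = Fintype.card α} := by
  rw [card_eq_sum_card_fiberwise (f := fun S => Fintype.card α - 2 * #S)
    (t := Icc 1 (Fintype.card α - 2))]
  · refine sum_congr rfl fun k hk => congrArg card ?_
    rw [filter_filter]
    refine filter_congr fun S _ => ?_
    rw [mem_Icc] at hk
    rw [and_assoc]
    exact and_congr_right fun _ => by omega
  · intro S hS
    simp only [coe_filter, mem_univ, true_and, Set.mem_ofPred_eq] at hS
    have := (hS.1.nonempty hg).card_pos
    simp only [coe_Icc, Set.mem_Icc]
    omega

lemma card_isEqualSum_lt_two_mul_card :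
    #{S | IsEqualSum g S ∧ Fintype.card α < 2 * #S} =
      #{S | IsEqualSum g S ∧ 2 * #S < Fintype.card α} := by
  rw [← card_filter_compl]
  refine congrArg card (filter_congr fun S _ => ?_)
  rw [isEqualSum_compl, card_compl]
  have := card_le_univ S
  exact and_congr_right fun _ => by omega

lemma card_isEqualSum_eq (hg : 0 < ∑ i, g i) :
    #{S | IsEqualSum g S} = #{S | IsEqualSum g S ∧ 2 * #S = Fintype.card α} +
      2 * ∑ k ∈ Icc 1 (Fintype.card α - 2),
        #{S | IsEqualSum g S ∧ 2 * #S + k = Fintype.card α} := by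
  have hne : #{S | IsEqualSum g S ∧ 2 * #S ≠ Fintype.card α} =
      #{S | IsEqualSum g S ∧ 2 * #S < Fintype.card α} +
        #{S | IsEqualSum g S ∧ Fintype.card α < 2 * #S} := by
    rw [← card_filter_add_card_filter_and_not _ (fun S => 2 * #S < Fintype.card α)]
    congr 1 <;> refine congrArg card (filter_congr fun S _ => ?_) <;> rw [and_assoc] <;>
      exact and_congr_right fun _ => by omega
  rw [← card_filter_add_card_filter_and_not _ (fun S => 2 * #S = Fintype.card α), hne,
    card_isEqualSum_lt_two_mul_card, card_isEqualSum_two_mul_card_lt hg, two_mul]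

end EqualSum

def padWeight (k t : ℕ) (j : Fin (k + 2)) : ℕ :=
  if (j : ℕ) < k + 1 then t else (k + 1) * t

lemma sum_padWeight (k t : ℕ) : ∑ j, padWeight k t j = 2 * (k + 1) * t := by
  have hlow : ∀ j : Fin (k + 1), padWeight k t j.castSucc = t := fun j => if_pos j.isLt
  have hlast : padWeight k t (Fin.last (k + 1)) = (k + 1) * t := if_neg (lt_irrefl _)
  rw [Fin.sum_univ_castSucc, hlast, sum_congr rfl fun j _ => hlow j, sum_const, card_univ,
    Fintype.card_fin, smul_eq_mul]
  ring

lemma sum_padWeight_of_last_notMem {k : ℕ} (t : ℕ) {B : Finset (Fin (k + 2))}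
    (hB : Fin.last (k + 1) ∉ B) : ∑ j ∈ B, padWeight k t j = #B * t :=
  sum_const_nat fun _ hj => if_pos (Fin.val_lt_last (ne_of_mem_of_not_mem hj hB))

lemma eq_and_two_mul_eq_of_two_mul_add_mul_eq {a j m t : ℕ} (ht : 0 < t) (ha : a ≤ t)
    (hj : j ≤ m) (h : 2 * (a + j * t) = (2 * m + 1) * t) : j = m ∧ 2 * a = t := by
  obtain rfl : j = m := by nlinarith
  exact ⟨rfl, by linarith⟩

section Padding

variable {ι : Type*} [Fintype ι] [DecidableEq ι] {f : ι → ℕ} {k t : ℕ}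

lemma equalSize_isEqualSum_sumElim_padWeight_iff (ht : ∑ i, f i = t) (ht0 : 0 < t)
    {S : Finset (ι ⊕ Fin (k + 2))} (hS : Sum.inr (Fin.last (k + 1)) ∉ S) :
    2 * #S = Fintype.card ι + k + 2 ∧ IsEqualSum (Sum.elim f (padWeight k t)) S ↔
      S.toRight = {Fin.last (k + 1)}ᶜ ∧ IsEqualSum f S.toLeft ∧
        2 * #S.toLeft + k = Fintype.card ι := by
  have hlast : Fin.last (k + 1) ∉ S.toRight := by rwa [mem_toRight]
  have hsub : S.toRight ⊆ {Fin.last (k + 1)}ᶜ := by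
    intro j hj
    rw [mem_compl, mem_singleton]
    exact ne_of_mem_of_not_mem hj hlast
  have hcompl : #({Fin.last (k + 1)}ᶜ : Finset (Fin (k + 2))) = k + 1 := by
    rw [card_compl, card_singleton, Fintype.card_fin]; rfl
  have hB : #S.toRight ≤ k + 1 := hcompl ▸ card_le_card hsub
  have hA : ∑ i ∈ S.toLeft, f i ≤ t := ht ▸ sum_le_univ_sum_of_nonneg fun _ => Nat.zero_le _
  have hsum :
      ∑ x ∈ S, Sum.elim f (padWeight k t) x = ∑ i ∈ S.toLeft, f i + #S.toRight * t := by
    rw [sum_sum_eq_sum_toLeft_add_sum_toRight]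
    simp only [Sum.elim_inl, Sum.elim_inr, sum_padWeight_of_last_notMem t hlast]
  have htot : ∑ x, Sum.elim f (padWeight k t) x = (2 * (k + 1) + 1) * t := by
    rw [Fintype.sum_sum_type]
    simp only [Sum.elim_inl, Sum.elim_inr, sum_padWeight, ht]
    ring
  rw [isEqualSum_iff_two_mul, isEqualSum_iff_two_mul, hsum, htot, ht,
    ← card_toLeft_add_card_toRight]
  constructor
  · rintro ⟨hcard, hsplit⟩
    obtain ⟨hBk, hAt⟩ := eq_and_two_mul_eq_of_two_mul_add_mul_eq ht0 hA hB hsplit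
    exact ⟨eq_of_subset_of_card_le hsub (by omega), hAt, by omega⟩
  · rintro ⟨hBeq, hAt, hcard⟩
    rw [hBeq, hcompl]
    exact ⟨by omega, by linarith⟩

lemma card_equalSize_isEqualSum_sumElim_padWeight (ht : ∑ i, f i = t) (ht0 : 0 < t) :
    #{S : Finset (ι ⊕ Fin (k + 2)) |
        2 * #S = Fintype.card ι + k + 2 ∧ IsEqualSum (Sum.elim f (padWeight k t)) S} =
      2 * #{A | IsEqualSum f A ∧ 2 * #A + k = Fintype.card ι} := by
  have hcompl : ∀ S : Finset (ι ⊕ Fin (k + 2)),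
      (2 * #Sᶜ = Fintype.card ι + k + 2 ∧ IsEqualSum (Sum.elim f (padWeight k t)) Sᶜ) ↔
        (2 * #S = Fintype.card ι + k + 2 ∧ IsEqualSum (Sum.elim f (padWeight k t)) S) := by
    intro S
    have := card_le_univ S
    rw [isEqualSum_compl, card_compl, Fintype.card_sum, Fintype.card_fin] at *
    exact and_congr_left fun _ => by omega
  rw [card_filter_eq_two_mul_card_filter_notMem _ hcompl (Sum.inr (Fin.last (k + 1)))]
  congr 1
  refine card_nbij' toLeft (fun A => A.disjSum {Fin.last (k + 1)}ᶜ) ?_ ?_ ?_ ?_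
  · intro S hS
    simp only [coe_filter, mem_univ, true_and, Set.mem_ofPred_eq] at hS ⊢
    exact ((equalSize_isEqualSum_sumElim_padWeight_iff ht ht0 hS.2).1 hS.1).2
  · intro A hA
    simp only [coe_filter, mem_univ, true_and, Set.mem_ofPred_eq] at hA ⊢
    have hlast : Sum.inr (Fin.last (k + 1)) ∉ A.disjSum {Fin.last (k + 1)}ᶜ := by simp
    refine ⟨(equalSize_isEqualSum_sumElim_padWeight_iff ht ht0 hlast).2 ?_, hlast⟩
    rw [toLeft_disjSum, toRight_disjSum]
    exact ⟨rfl, hA⟩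
  · intro S hS
    simp only [coe_filter, mem_univ, true_and, Set.mem_ofPred_eq] at hS
    rw [← ((equalSize_isEqualSum_sumElim_padWeight_iff ht ht0 hS.2).1 hS.1).1]
    exact toLeft_disjSum_toRight
  · intro A _
    exact toLeft_disjSum

end Padding

section Augment

variable {n : ℕ} {f : Fin n → ℕ} {k t : ℕ}

def augment (f : Fin n → ℕ) (t k : ℕ) (i : Fin (n + k + 2)) : ℕ :=
  if h : (i : ℕ) < n then f ⟨i, h⟩ else if (i : ℕ) < n + k + 1 then t else (k + 1) * t

lemma augment_comp_finSumFinEquiv :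
    augment f t k ∘ (finSumFinEquiv : Fin n ⊕ Fin (k + 2) ≃ _) =
      Sum.elim f (padWeight k t) := by
  ext (a | j) <;> simp [augment, padWeight]

lemma card_equalSize_isEqualSum_augment (ht : ∑ i, f i = t) (ht0 : 0 < t) :
    #{S : Finset (Fin (n + k + 2)) | 2 * #S = n + k + 2 ∧ IsEqualSum (augment f t k) S} =
      2 * #{A | IsEqualSum f A ∧ 2 * #A + k = n} := by
  refine (card_filter_map_equiv (finSumFinEquiv : Fin n ⊕ Fin (k + 2) ≃ _) _).symm.trans ?_
  simp only [card_map, isEqualSum_map_equiv, augment_comp_finSumFinEquiv]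
  simpa using card_equalSize_isEqualSum_sumElim_padWeight ht ht0

end Augment

/-- Let `n ≥ 1`, `f : Fin n → ℕ` with `f i ≥ 1`, and `t = ∑ f i`.  For each `k` let
`E k` be the number of subsets `S ⊆ Fin (n+k+2)` with `2|S| = n+k+2` which are equal-sum for
the function equal to `f` on the first `n` indices, to `t` on the next `k+1` indices, and to
`(k+1)·t` on the last index.  Then
`2 · #{S ⊆ Fin n : S equal-sum for f} = E 0 + 2 · ∑_{k=1}^{n−2} E k`. -/
theorem stmt9 (n : ℕ) (hn : 1 ≤ n) (f : Fin n → ℕ) (hf : ∀ i, 1 ≤ f i)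
    (t : ℕ) (ht : t = ∑ i, f i)
    (E : ℕ → ℕ)
    (hE : ∀ k : ℕ, E k =
      (Finset.univ.filter
        (fun S : Finset (Fin (n + k + 2)) =>
          2 * S.card = n + k + 2 ∧
            ∑ i ∈ S, (if h : (i : ℕ) < n then f ⟨i, h⟩
                else if (i : ℕ) < n + k + 1 then t else (k + 1) * t)
              = ∑ i ∈ Sᶜ, (if h : (i : ℕ) < n then f ⟨i, h⟩
                else if (i : ℕ) < n + k + 1 then t else (k + 1) * t))).card) :
    2 * (Finset.univ.filter
        (fun S : Finset (Fin n) => ∑ i ∈ S, f i = ∑ i ∈ Sᶜ, f i)).card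
      = E 0 + 2 * ∑ k ∈ Finset.Icc 1 (n - 2), E k := by
  have ht0 : 0 < t := ht ▸ sum_pos (fun i _ => hf i) ⟨⟨0, hn⟩, mem_univ _⟩
  have hEk : ∀ k, E k = 2 * #{A | IsEqualSum f A ∧ 2 * #A + k = n} := fun k =>
    (hE k).trans (card_equalSize_isEqualSum_augment ht.symm ht0)
  have hcount := card_isEqualSum_eq (g := f) (ht ▸ ht0)
  rw [Fintype.card_fin] at hcount
  change 2 * #{S | IsEqualSum f S} = _
  rw [hcount, hEk 0, sum_congr rfl fun k _ => hEk k, ← mul_sum]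
  simp only [add_zero]
  ring
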